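/- arXiv:1110.5145 — 2 statements merged into one kernel-verified Lean document; each statement's English description precedes it below -/
import Mathlib

section
/- Let m ≥ 1, C₄ > 0, M > 0, C₁ > 0, and a > 0 be real numbers, and set p := 1/(2C₄). Let k be a real number with k² ≥ 1/(C₁ M), and let A be a real number with 0 < A ≤ 1/e and a k² ≤ p log(1/A). Set T := p log(1/A) and C₅ := max{ C₁² (4m/e)^{2m}, p^{−2m} } · M² · (1 + p/a)^{2m}. Then (1/k⁴) exp(C₄ T) A + M² T^{−2m} ≤ 2 C₅ ( k² + log(1/A) )^{−2m}. -/
/-! With `L = log (1/A)` one has `T = p L` and `exp (C₄ T) A = exp (-L/2)`, so both terms of `Φ(T)`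
are multiples of `L^{-2m}`: the first through `exp (-L/2) ≤ (4m/e)^{2m} L^{-2m}` and
`1/k⁴ ≤ (C₁ M)²`, the second directly. In the regime `a k² ≤ p L` one has
`k² + L ≤ (1 + p/a) L`, which turns `L^{-2m}` into `(1 + p/a)^{2m} (k² + L)^{-2m}`. -/

open Real

lemma rpow_le_div_exp_one_rpow_mul_exp {x r : ℝ} (hx : 0 ≤ x) (hr : 0 < r) :
    x ^ r ≤ (r / exp 1) ^ r * exp x := by
  have hxr : x / r ≤ exp (x / r - 1) := by linarith [add_one_le_exp (x / r - 1)]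
  calc x ^ r = r ^ r * (x / r) ^ r := by
        rw [div_rpow hx hr.le, mul_div_cancel₀ _ (rpow_pos_of_pos hr r).ne']
    _ ≤ r ^ r * exp (x / r - 1) ^ r := by gcongr
    _ = (r / exp 1) ^ r * exp x := by
        rw [← exp_mul, sub_mul, div_mul_cancel₀ x hr.ne', one_mul, exp_sub,
          div_rpow hr.le (exp_pos 1).le, exp_one_rpow]
        ring

lemma exp_neg_mul_le_rpow_mul_rpow_neg {c r x : ℝ} (hc : 0 < c) (hr : 0 < r) (hx : 0 < x) :
    exp (-(c * x)) ≤ (r / (c * exp 1)) ^ r * x ^ (-r) := by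
  have key := rpow_le_div_exp_one_rpow_mul_exp (mul_pos hc hx).le hr
  rw [mul_rpow hc.le hx.le] at key
  rw [div_mul_eq_div_div_swap, div_rpow (by positivity) hc.le, exp_neg, rpow_neg hx.le,
    ← div_eq_mul_inv, div_div, le_div_iff₀ (by positivity), inv_mul_le_iff₀ (exp_pos _)]
  linarith

lemma rpow_neg_le_one_add_rpow_mul_add_rpow_neg {s q L r : ℝ} (hL : 0 < L) (hs : 0 ≤ s)
    (hsq : s ≤ q * L) (hr : 0 ≤ r) :
    L ^ (-r) ≤ (1 + q) ^ r * (s + L) ^ (-r) := by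
  have hq : 0 ≤ q := nonneg_of_mul_nonneg_left (hs.trans hsq) hL
  rw [rpow_neg hL.le, rpow_neg (by positivity), ← div_eq_mul_inv, le_div_iff₀ (by positivity),
    inv_mul_le_iff₀ (by positivity)]
  calc (s + L) ^ r ≤ ((1 + q) * L) ^ r := by gcongr; linarith
    _ = L ^ r * (1 + q) ^ r := by rw [mul_rpow (by positivity) hL.le, mul_comm]

/-- The estimate `Φ(T) ≤ 2C₅ (k² + log(1/A))^{−2m}` in the logarithmic regime
`a k² ≤ p log(1/A)`, with `T = p log(1/A)`, `p = 1/(2C₄)` and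
`C₅ = max{C₁² (4m/e)^{2m}, p^{−2m}} M² (1 + p/a)^{2m}`. -/
theorem phi_estimate_log_regime (m C₄ M C₁ a : ℝ)
    (hm : 1 ≤ m) (hC₄ : 0 < C₄) (hM : 0 < M) (hC₁ : 0 < C₁) (ha : 0 < a)
    (p : ℝ) (hp : p = 1 / (2 * C₄))
    (k : ℝ) (hk : 1 / (C₁ * M) ≤ k ^ 2)
    (A : ℝ) (hA0 : 0 < A) (hA1 : A ≤ 1 / Real.exp 1)
    (hak : a * k ^ 2 ≤ p * Real.log (1 / A))
    (T : ℝ) (hT : T = p * Real.log (1 / A))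
    (C₅ : ℝ)
    (hC₅ : C₅ = max (C₁ ^ 2 * (4 * m / Real.exp 1) ^ (2 * m)) (p ^ (-(2 * m)))
      * M ^ 2 * (1 + p / a) ^ (2 * m)) :
    (1 / k ^ 4) * Real.exp (C₄ * T) * A + M ^ 2 * T ^ (-(2 * m))
      ≤ 2 * C₅ * (k ^ 2 + Real.log (1 / A)) ^ (-(2 * m)) := by
  set L := log (1 / A)
  have hL : 1 ≤ L := (le_log_iff_exp_le (by positivity)).2 ((le_one_div (exp_pos 1) hA0).2 hA1)
  have hp0 : 0 < p := by rw [hp]; positivity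
  have hexpA : exp (C₄ * T) * A = exp (-(1 / 2 * L)) := by
    have hCT : C₄ * T = L / 2 := by rw [hT, hp]; field_simp
    rw [hCT, ← exp_log hA0, ← exp_add, show log A = -L by simp [L]]
    ring_nf
  have hk4 : 1 / k ^ 4 ≤ C₁ ^ 2 * M ^ 2 := by
    have hk2 : 0 < k ^ 2 := lt_of_lt_of_le (by positivity) hk
    have hk' : 1 / k ^ 2 ≤ C₁ * M := by rwa [one_div_le hk2 (by positivity)]
    calc 1 / k ^ 4 = (1 / k ^ 2) ^ 2 := by ring
      _ ≤ (C₁ * M) ^ 2 := by gcongr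
      _ = C₁ ^ 2 * M ^ 2 := by ring
  have hterm₁ : 1 / k ^ 4 * exp (C₄ * T) * A
      ≤ C₁ ^ 2 * (4 * m / exp 1) ^ (2 * m) * M ^ 2 * L ^ (-(2 * m)) := by
    have hexp := exp_neg_mul_le_rpow_mul_rpow_neg (c := 1 / 2) (r := 2 * m) (x := L)
      (by norm_num) (by linarith) (by linarith)
    rw [show 2 * m / (1 / 2 * exp 1) = 4 * m / exp 1 by field_simp; ring] at hexp
    rw [mul_assoc, hexpA]
    calc 1 / k ^ 4 * exp (-(1 / 2 * L))
        ≤ C₁ ^ 2 * M ^ 2 * ((4 * m / exp 1) ^ (2 * m) * L ^ (-(2 * m))) := by gcongr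
      _ = _ := by ring
  have hterm₂ : M ^ 2 * T ^ (-(2 * m)) = p ^ (-(2 * m)) * M ^ 2 * L ^ (-(2 * m)) := by
    rw [hT, mul_rpow hp0.le (by linarith)]; ring
  have hregime : L ^ (-(2 * m)) ≤ (1 + p / a) ^ (2 * m) * (k ^ 2 + L) ^ (-(2 * m)) :=
    rpow_neg_le_one_add_rpow_mul_add_rpow_neg (by linarith) (sq_nonneg k)
      (by rw [div_mul_eq_mul_div, le_div_iff₀ ha]; linarith) (by linarith)
  calc _ ≤ (C₁ ^ 2 * (4 * m / exp 1) ^ (2 * m) + p ^ (-(2 * m))) * M ^ 2 * L ^ (-(2 * m)) := by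
        rw [hterm₂]; linarith
    _ ≤ 2 * max (C₁ ^ 2 * (4 * m / exp 1) ^ (2 * m)) (p ^ (-(2 * m))) * M ^ 2
          * L ^ (-(2 * m)) := by
        gcongr
        linarith [le_max_left (C₁ ^ 2 * (4 * m / exp 1) ^ (2 * m)) (p ^ (-(2 * m))),
          le_max_right (C₁ ^ 2 * (4 * m / exp 1) ^ (2 * m)) (p ^ (-(2 * m)))]
    _ ≤ 2 * max (C₁ ^ 2 * (4 * m / exp 1) ^ (2 * m)) (p ^ (-(2 * m))) * M ^ 2
          * ((1 + p / a) ^ (2 * m) * (k ^ 2 + L) ^ (-(2 * m))) := by gcongr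
    _ = _ := by rw [hC₅]; ring
end

section
/- Let m ≥ 1, C > 0, C₄ > 0, a > 0, M > 0, and C₁ > 0 be real numbers. Then there exists a constant C' > 0, depending only on m, C, C₄, a, M, and C₁, with the following property: for all real numbers k, X, A with X ≥ 0, 0 < A ≤ 1/e, and k² ≥ 1/(C₁ M), if X² ≤ (C/k⁴) exp(C a k²) A + C [ (1/k⁴) exp(C₄ T) A + M² T^{−2m} ] holds for every real T ≥ a k², then X² ≤ (C'/k⁴) exp(C' k²) A + C' ( k² + log(1/A) )^{−2m}. -/
set_option maxHeartbeats 1000000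


/-- Real-variable lemma encapsulating the conclusion of the stability proof:
if `X² ≤ (C/k⁴) e^{C a k²} A + C [ (1/k⁴) e^{C₄ T} A + M² T^{−2m} ]` for every
`T ≥ a k²`, then `X² ≤ (C'/k⁴) e^{C' k²} A + C' (k² + log(1/A))^{−2m}` for a
constant `C'` depending only on `m, C, C₄, a, M, C₁`. -/
theorem stability_conclusion (m C C₄ a M C₁ : ℝ)
    (hm : 1 ≤ m) (hC : 0 < C) (hC₄ : 0 < C₄) (ha : 0 < a)
    (hM : 0 < M) (hC₁ : 0 < C₁) :
    ∃ C' : ℝ, 0 < C' ∧ ∀ k X A : ℝ, 0 ≤ X → 0 < A → A ≤ 1 / Real.exp 1 →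
      1 / (C₁ * M) ≤ k ^ 2 →
      (∀ T : ℝ, a * k ^ 2 ≤ T →
        X ^ 2 ≤ C / k ^ 4 * Real.exp (C * a * k ^ 2) * A
          + C * ((1 / k ^ 4) * Real.exp (C₄ * T) * A + M ^ 2 * T ^ (-(2 * m)))) →
      X ^ 2 ≤ C' / k ^ 4 * Real.exp (C' * k ^ 2) * A
        + C' * (k ^ 2 + Real.log (1 / A)) ^ (-(2 * m)) := by
  set n : ℕ := ⌈(2 : ℝ) * m⌉₊ with hn
  set K : ℝ := (n.factorial : ℝ) * 2 ^ n with hK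
  have hK0 : 0 < K := by positivity
  set c₂ : ℝ := 1 + 1 / (2 * C₄ * a) with hc₂
  have hc₂0 : 0 < c₂ := by positivity
  set c₃ : ℝ := (1 + 2 * C₄ * a) / a with hc₃
  have hc₃0 : 0 < c₃ := by positivity
  refine ⟨max (max (2 * C) ((C + C₄) * a))
    (max (C * M ^ 2 * c₃ ^ ((2:ℝ) * m))
      (C * (C₁ * M) ^ 2 * K * c₂ ^ ((2:ℝ) * m)
        + C * M ^ 2 * (2 * C₄ * c₂) ^ ((2:ℝ) * m))), ?_, ?_⟩
  · have h0 : (0:ℝ) < 2 * C := by positivity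
    exact lt_of_lt_of_le h0 (le_max_of_le_left (le_max_left _ _))
  set C' := max (max (2 * C) ((C + C₄) * a))
    (max (C * M ^ 2 * c₃ ^ ((2:ℝ) * m))
      (C * (C₁ * M) ^ 2 * K * c₂ ^ ((2:ℝ) * m)
        + C * M ^ 2 * (2 * C₄ * c₂) ^ ((2:ℝ) * m))) with hC'
  intro k X A hX hA hAe hk2 hyp
  have hk2pos : (0:ℝ) < k ^ 2 := lt_of_lt_of_le (by positivity) hk2
  have hk4pos : (0:ℝ) < k ^ 4 := by
    have hk0 : k ≠ 0 := by
      intro h0; rw [h0] at hk2pos; simp at hk2pos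
    positivity
  set L : ℝ := Real.log (1 / A) with hL
  have hL1 : 1 ≤ L := by
    rw [hL, one_div, Real.log_inv, le_neg]
    have h := Real.log_le_log hA hAe
    rwa [one_div, Real.log_inv, Real.log_exp] at h
  have hLpos : 0 < L := lt_of_lt_of_le one_pos hL1
  have hS : (0:ℝ) < k ^ 2 + L := by positivity
  have hSneg_pos : (0:ℝ) < (k ^ 2 + L) ^ (-(2 * m)) := Real.rpow_pos_of_pos hS _
  have hC'1 : 2 * C ≤ C' := le_max_of_le_left (le_max_left _ _)
  have hC'2 : (C + C₄) * a ≤ C' := le_max_of_le_left (le_max_right _ _)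
  have hC'3 : C * M ^ 2 * c₃ ^ ((2:ℝ) * m) ≤ C' := le_max_of_le_right (le_max_left _ _)
  have hC'4 : C * (C₁ * M) ^ 2 * K * c₂ ^ ((2:ℝ) * m)
      + C * M ^ 2 * (2 * C₄ * c₂) ^ ((2:ℝ) * m) ≤ C' := le_max_of_le_right (le_max_right _ _)
  have hCC' : C ≤ C' := by linarith
  have hC'pos : 0 < C' := lt_of_lt_of_le hC hCC'
  have hCa : C * a ≤ C' := by
    have h0 : C * a ≤ (C + C₄) * a := mul_le_mul_of_nonneg_right (by linarith) ha.le
    linarith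
  have hexp1 : Real.exp (C * a * k ^ 2) ≤ Real.exp (C' * k ^ 2) := by
    exact Real.exp_le_exp.mpr (mul_le_mul_of_nonneg_right hCa hk2pos.le)
  have hfirst : C / k ^ 4 * Real.exp (C * a * k ^ 2) * A
      ≤ C' / k ^ 4 * Real.exp (C' * k ^ 2) * A := by
    gcongr
  have hm2 : -(2 * m) ≤ (0:ℝ) := by linarith
  -- helper: (c * x)^{-(2m)} ≥ ... gives x^{-(2m)} ≤ c^{2m} * (k²+L)^{-(2m)} when k²+L ≤ c*x
  have helper : ∀ c x : ℝ, 0 < c → 0 < x → k ^ 2 + L ≤ c * x →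
      x ^ (-(2 * m)) ≤ c ^ ((2:ℝ) * m) * (k ^ 2 + L) ^ (-(2 * m)) := by
    intro c x hc hx hle
    have hr : (c * x) ^ (-(2 * m)) ≤ (k ^ 2 + L) ^ (-(2 * m)) :=
      Real.rpow_le_rpow_of_nonpos hS hle hm2
    rw [Real.mul_rpow hc.le hx.le, Real.rpow_neg hc.le] at hr
    have hpow_pos : (0:ℝ) < c ^ ((2:ℝ) * m) := Real.rpow_pos_of_pos hc _
    calc x ^ (-(2 * m))
        = c ^ ((2:ℝ) * m) * ((c ^ ((2:ℝ) * m))⁻¹ * x ^ (-(2 * m))) := by field_simp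
      _ ≤ c ^ ((2:ℝ) * m) * (k ^ 2 + L) ^ (-(2 * m)) :=
          mul_le_mul_of_nonneg_left hr hpow_pos.le
  rcases le_or_gt L (2 * C₄ * (a * k ^ 2)) with hcase | hcase
  · -- Case 1: T = a k²
    have h := hyp (a * k ^ 2) le_rfl
    have hT0 : (0:ℝ) < a * k ^ 2 := by positivity
    have hexp2 : Real.exp (C₄ * (a * k ^ 2)) ≤ Real.exp (C' * k ^ 2) := by
      apply Real.exp_le_exp.mpr
      have hC4a : C₄ * a ≤ C' := by
        have h0 : C₄ * a ≤ (C + C₄) * a := mul_le_mul_of_nonneg_right (by linarith) ha.le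
        linarith
      calc C₄ * (a * k ^ 2) = (C₄ * a) * k ^ 2 := by ring
        _ ≤ C' * k ^ 2 := mul_le_mul_of_nonneg_right hC4a hk2pos.le
    have h12 : C / k ^ 4 * Real.exp (C * a * k ^ 2) * A
        + C * ((1 / k ^ 4) * Real.exp (C₄ * (a * k ^ 2)) * A)
        ≤ C' / k ^ 4 * Real.exp (C' * k ^ 2) * A := by
      have hb1 : C / k ^ 4 * Real.exp (C * a * k ^ 2) * A
          ≤ C / k ^ 4 * Real.exp (C' * k ^ 2) * A := by gcongr
      have hb2 : C * ((1 / k ^ 4) * Real.exp (C₄ * (a * k ^ 2)) * A)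
          ≤ C / k ^ 4 * Real.exp (C' * k ^ 2) * A := by
        have he : C * ((1 / k ^ 4) * Real.exp (C₄ * (a * k ^ 2)) * A)
            = C / k ^ 4 * Real.exp (C₄ * (a * k ^ 2)) * A := by ring
        rw [he]; gcongr
      have hsum : C / k ^ 4 * Real.exp (C' * k ^ 2) * A + C / k ^ 4 * Real.exp (C' * k ^ 2) * A
          = 2 * C / k ^ 4 * Real.exp (C' * k ^ 2) * A := by ring
      have := add_le_add hb1 hb2
      rw [hsum] at this
      refine this.trans ?_
      gcongr
    have hSle : k ^ 2 + L ≤ c₃ * (a * k ^ 2) := by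
      rw [hc₃]; rw [div_mul_eq_mul_div, le_div_iff₀ ha]
      nlinarith [mul_le_mul_of_nonneg_left hcase ha.le]
    have h3 : C * (M ^ 2 * (a * k ^ 2) ^ (-(2 * m)))
        ≤ C' * (k ^ 2 + L) ^ (-(2 * m)) := by
      have hak := helper c₃ (a * k ^ 2) hc₃0 hT0 hSle
      calc C * (M ^ 2 * (a * k ^ 2) ^ (-(2 * m)))
          ≤ C * (M ^ 2 * (c₃ ^ ((2:ℝ) * m) * (k ^ 2 + L) ^ (-(2 * m)))) := by gcongr
        _ = (C * M ^ 2 * c₃ ^ ((2:ℝ) * m)) * (k ^ 2 + L) ^ (-(2 * m)) := by ring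
        _ ≤ C' * (k ^ 2 + L) ^ (-(2 * m)) := by gcongr
    calc X ^ 2 ≤ C / k ^ 4 * Real.exp (C * a * k ^ 2) * A
          + C * ((1 / k ^ 4) * Real.exp (C₄ * (a * k ^ 2)) * A
            + M ^ 2 * (a * k ^ 2) ^ (-(2 * m))) := h
      _ = (C / k ^ 4 * Real.exp (C * a * k ^ 2) * A
            + C * ((1 / k ^ 4) * Real.exp (C₄ * (a * k ^ 2)) * A))
          + C * (M ^ 2 * (a * k ^ 2) ^ (-(2 * m))) := by ring
      _ ≤ C' / k ^ 4 * Real.exp (C' * k ^ 2) * A + C' * (k ^ 2 + L) ^ (-(2 * m)) :=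
          add_le_add h12 h3
  · -- Case 2: T = L / (2 C₄)
    set T : ℝ := L / (2 * C₄) with hT
    have hTpos : 0 < T := by positivity
    have hTge : a * k ^ 2 ≤ T := by
      rw [hT, le_div_iff₀ (by positivity)]; nlinarith [hcase.le]
    have h := hyp T hTge
    have hexpT : Real.exp (C₄ * T) * A = Real.exp (-(L / 2)) := by
      have hAexp : A = Real.exp (-L) := by
        rw [hL, one_div, Real.log_inv, neg_neg, Real.exp_log hA]
      rw [hAexp, ← Real.exp_add]
      congr 1
      rw [hT]; field_simp; ring
    have hSle : k ^ 2 + L ≤ c₂ * L := by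
      rw [hc₂]
      have hk2L : k ^ 2 ≤ L / (2 * C₄ * a) := by
        rw [le_div_iff₀ (by positivity)]; nlinarith [hcase.le]
      have hd : 1 / (2 * C₄ * a) * L = L / (2 * C₄ * a) := by ring
      nlinarith [hd, hk2L]
    have hLbd := helper c₂ L hc₂0 hLpos hSle
    -- key: e^{-L/2} ≤ K * L^{-(2m)}
    have hkey : Real.exp (-(L / 2)) ≤ K * L ^ (-(2 * m)) := by
      have h1 : L ^ ((2:ℝ) * m) ≤ L ^ ((n : ℝ)) :=
        Real.rpow_le_rpow_of_exponent_le hL1 (Nat.le_ceil _)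
      have h2 : L ^ ((n:ℝ)) = L ^ n := Real.rpow_natCast L n
      have h3 : (L / 2) ^ n / n.factorial ≤ Real.exp (L / 2) :=
        Real.pow_div_factorial_le_exp (L / 2) (by positivity) n
      have h4 : L ^ n ≤ K * Real.exp (L / 2) := by
        rw [div_pow, div_div, div_le_iff₀ (by positivity)] at h3
        rw [hK]; nlinarith
      have h5 : L ^ ((2:ℝ) * m) ≤ K * Real.exp (L / 2) := by
        rw [← h2] at h4; linarith
      have hLp : (0:ℝ) < L ^ ((2:ℝ) * m) := Real.rpow_pos_of_pos hLpos _
      rw [Real.rpow_neg hLpos.le, Real.exp_neg, mul_comm K,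
        inv_eq_one_div, inv_eq_one_div, div_mul_eq_mul_div, one_mul,
        div_le_div_iff₀ (Real.exp_pos _) hLp]
      linarith [h5]
    -- bound term 2
    have ht2 : C * ((1 / k ^ 4) * Real.exp (C₄ * T) * A)
        ≤ C * (C₁ * M) ^ 2 * K * c₂ ^ ((2:ℝ) * m) * (k ^ 2 + L) ^ (-(2 * m)) := by
      have hk4 : 1 / k ^ 4 ≤ (C₁ * M) ^ 2 := by
        have h1 : 1 / (C₁ * M) ≤ k ^ 2 := hk2
        have h2 : (1 / (C₁ * M)) ^ 2 ≤ k ^ 4 := by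
          have := pow_le_pow_left₀ (by positivity) h1 2
          calc (1 / (C₁ * M)) ^ 2 ≤ (k ^ 2) ^ 2 := this
            _ = k ^ 4 := by ring
        rw [div_pow, one_pow, div_le_iff₀ (by positivity)] at h2
        rw [div_le_iff₀ hk4pos]
        rw [mul_comm]; exact h2
      have he : C * ((1 / k ^ 4) * Real.exp (C₄ * T) * A)
          = C * (1 / k ^ 4) * (Real.exp (C₄ * T) * A) := by ring
      rw [he, hexpT]
      calc C * (1 / k ^ 4) * Real.exp (-(L / 2))
          ≤ C * (C₁ * M) ^ 2 * (K * L ^ (-(2 * m))) := by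
            have hLn : (0:ℝ) < L ^ (-(2 * m)) := Real.rpow_pos_of_pos hLpos _
            have := mul_le_mul (mul_le_mul_of_nonneg_left hk4 hC.le) hkey
              (Real.exp_pos _).le (by positivity)
            linarith [this]
        _ ≤ C * (C₁ * M) ^ 2 * (K * (c₂ ^ ((2:ℝ) * m) * (k ^ 2 + L) ^ (-(2 * m)))) := by
            gcongr
        _ = C * (C₁ * M) ^ 2 * K * c₂ ^ ((2:ℝ) * m) * (k ^ 2 + L) ^ (-(2 * m)) := by ring
    -- bound term 3
    have ht3 : C * (M ^ 2 * T ^ (-(2 * m)))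
        ≤ C * M ^ 2 * (2 * C₄ * c₂) ^ ((2:ℝ) * m) * (k ^ 2 + L) ^ (-(2 * m)) := by
      have hinv : ((2 * C₄ : ℝ)⁻¹) ^ (-(2 * m)) = (2 * C₄ : ℝ) ^ ((2:ℝ) * m) := by
        rw [Real.inv_rpow (by positivity), Real.rpow_neg (by positivity), inv_inv]
      have hTex : T ^ (-(2 * m)) = (2 * C₄) ^ ((2:ℝ) * m) * L ^ (-(2 * m)) := by
        rw [hT, div_eq_mul_inv, Real.mul_rpow hLpos.le (by positivity), hinv, mul_comm]
      have hmul2 : (2 * C₄ : ℝ) ^ ((2:ℝ) * m) * c₂ ^ ((2:ℝ) * m)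
          = (2 * C₄ * c₂) ^ ((2:ℝ) * m) := (Real.mul_rpow (by positivity) hc₂0.le).symm
      calc C * (M ^ 2 * T ^ (-(2 * m)))
          = C * M ^ 2 * (2 * C₄) ^ ((2:ℝ) * m) * L ^ (-(2 * m)) := by rw [hTex]; ring
        _ ≤ C * M ^ 2 * (2 * C₄) ^ ((2:ℝ) * m)
            * (c₂ ^ ((2:ℝ) * m) * (k ^ 2 + L) ^ (-(2 * m))) := by
            have hb : (0:ℝ) < C * M ^ 2 * (2 * C₄) ^ ((2:ℝ) * m) := by
              have := Real.rpow_pos_of_pos (show (0:ℝ) < 2 * C₄ by positivity) ((2:ℝ) * m)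
              positivity
            exact mul_le_mul_of_nonneg_left hLbd hb.le
        _ = C * M ^ 2 * ((2 * C₄) ^ ((2:ℝ) * m) * c₂ ^ ((2:ℝ) * m))
            * (k ^ 2 + L) ^ (-(2 * m)) := by ring
        _ = C * M ^ 2 * (2 * C₄ * c₂) ^ ((2:ℝ) * m) * (k ^ 2 + L) ^ (-(2 * m)) := by
            rw [hmul2]
    calc X ^ 2 ≤ C / k ^ 4 * Real.exp (C * a * k ^ 2) * A
          + C * ((1 / k ^ 4) * Real.exp (C₄ * T) * A + M ^ 2 * T ^ (-(2 * m))) := h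
      _ = C / k ^ 4 * Real.exp (C * a * k ^ 2) * A
          + (C * ((1 / k ^ 4) * Real.exp (C₄ * T) * A) + C * (M ^ 2 * T ^ (-(2 * m)))) := by
            ring
      _ ≤ C' / k ^ 4 * Real.exp (C' * k ^ 2) * A
          + (C * (C₁ * M) ^ 2 * K * c₂ ^ ((2:ℝ) * m)
            + C * M ^ 2 * (2 * C₄ * c₂) ^ ((2:ℝ) * m)) * (k ^ 2 + L) ^ (-(2 * m)) := by
            have := add_le_add ht2 ht3
            have hrw : C * (C₁ * M) ^ 2 * K * c₂ ^ ((2:ℝ) * m) * (k ^ 2 + L) ^ (-(2 * m))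
                + C * M ^ 2 * (2 * C₄ * c₂) ^ ((2:ℝ) * m) * (k ^ 2 + L) ^ (-(2 * m))
                = (C * (C₁ * M) ^ 2 * K * c₂ ^ ((2:ℝ) * m)
                  + C * M ^ 2 * (2 * C₄ * c₂) ^ ((2:ℝ) * m)) * (k ^ 2 + L) ^ (-(2 * m)) := by
                ring
            rw [hrw] at this
            exact add_le_add hfirst this
      _ ≤ C' / k ^ 4 * Real.exp (C' * k ^ 2) * A + C' * (k ^ 2 + L) ^ (-(2 * m)) := by
            gcongr
end
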